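/- For all q, n ≥ 1, Σ_{d ∥ q} |c̃_d(n)| ≤ 2^{ω(q)} · n. -/

import Mathlib

def uDivisors (n : ℕ) : Finset ℕ := n.divisors.filter (fun d => Nat.gcd d (n / d) = 1)

def mustar (n : ℕ) : ℤ := (-1) ^ n.primeFactors.card

def gcud (n q : ℕ) : ℕ := (uDivisors n ∩ uDivisors q).sup id

def ctilde (q n : ℕ) : ℤ := ∑ d ∈ uDivisors (gcud n q), (d : ℤ) * mustar (q / d)

/-!
The unitary divisors of `n ≠ 0` are the numbers `∏ p ∈ s, p ^ v_p(n)` for `s ⊆ primeFactors n`,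
so there are `2 ^ ω(n)` of them. Along this correspondence, for `g ∥ d` the sum
`∑_{e ∥ g} e μ*(d/e)` factors as `μ*(d/g) ∏_{p^a ∥ g} (p^a - 1)`, of absolute value at most `g`.
With `g = (n, d)_{**} ≤ n` this bounds every `|c̃_d(n)|` by `n`.
-/

open Finset

lemma mem_uDivisors {e n : ℕ} : e ∈ uDivisors n ↔ e ∣ n ∧ e.Coprime (n / e) ∧ n ≠ 0 := by
  simp only [uDivisors, mem_filter, Nat.mem_divisors, Nat.coprime_iff_gcd_eq_one]
  tauto

lemma primeFactors_prod_pow {s : Finset ℕ} {a : ℕ → ℕ} (hs : ∀ p ∈ s, p.Prime)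
    (ha : ∀ p ∈ s, a p ≠ 0) : (∏ p ∈ s, p ^ a p).primeFactors = s := by
  ext q
  simp only [Nat.mem_primeFactors, prod_ne_zero_iff]
  constructor
  · rintro ⟨hq, hdvd, -⟩
    obtain ⟨p, hp, hqp⟩ := (Prime.dvd_finsetProd_iff hq.prime _).1 hdvd
    rwa [(Nat.prime_dvd_prime_iff_eq hq (hs p hp)).1 (hq.dvd_of_dvd_pow hqp)]
  · intro hq
    exact ⟨hs q hq, (dvd_pow_self q (ha q hq)).trans (dvd_prod_of_mem _ hq),
      fun p hp => pow_ne_zero _ (hs p hp).ne_zero⟩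

lemma primeFactors_prod_pow_factorization {n : ℕ} {s : Finset ℕ} (hs : s ⊆ n.primeFactors) :
    (∏ p ∈ s, p ^ n.factorization p).primeFactors = s :=
  primeFactors_prod_pow (fun _ hp => Nat.prime_of_mem_primeFactors (hs hp))
    fun _ hp => Finsupp.mem_support_iff.1 (n.support_factorization ▸ hs hp)

lemma injOn_prod_pow_factorization (n : ℕ) :
    Set.InjOn (fun s => ∏ p ∈ s, p ^ n.factorization p) n.primeFactors.powerset :=
  Set.LeftInvOn.injOn (f₁' := Nat.primeFactors) fun _ hs =>
    primeFactors_prod_pow_factorization (mem_powerset.1 hs)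

lemma prod_pow_factorization_mem_uDivisors {n : ℕ} {s : Finset ℕ} (hn : n ≠ 0)
    (hs : s ⊆ n.primeFactors) : ∏ p ∈ s, p ^ n.factorization p ∈ uDivisors n := by
  set e := ∏ p ∈ s, p ^ n.factorization p
  set k := ∏ p ∈ n.primeFactors \ s, p ^ n.factorization p
  have hmul : e * k = n := by
    rw [mul_comm, prod_sdiff hs, ← Nat.prod_primeFactors_pow_factorization hn]
  have hcop : e.Coprime k :=
    Nat.Coprime.prod_left fun p hp => Nat.Coprime.prod_right fun q hq =>
      Nat.coprime_pow_primes _ _ (Nat.prime_of_mem_primeFactors (hs hp))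
        (Nat.prime_of_mem_primeFactors (mem_sdiff.1 hq).1)
        (by rintro rfl; exact (mem_sdiff.1 hq).2 hp)
  have hdiv : n / e = k := by
    rw [← hmul, Nat.mul_div_cancel_left _ (Nat.pos_of_ne_zero (left_ne_zero_of_mul (hmul ▸ hn)))]
  exact mem_uDivisors.2 ⟨Dvd.intro k hmul, hdiv ▸ hcop, hn⟩

lemma factorization_eq_of_mem_uDivisors {e n p : ℕ} (he : e ∈ uDivisors n)
    (hp : p ∈ e.primeFactors) : e.factorization p = n.factorization p := by
  obtain ⟨hen, hcop, -⟩ := mem_uDivisors.1 he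
  have hpk : ¬ p ∣ n / e := fun h =>
    (Nat.prime_of_mem_primeFactors hp).one_lt.ne'
      (Nat.eq_one_of_dvd_one (hcop ▸ Nat.dvd_gcd (Nat.dvd_of_mem_primeFactors hp) h))
  rw [← Nat.mul_div_cancel' hen, Nat.factorization_mul_of_coprime hcop, Finsupp.add_apply,
    Nat.factorization_eq_zero_of_not_dvd hpk, add_zero]

lemma uDivisors_eq_image {n : ℕ} (hn : n ≠ 0) :
    uDivisors n = n.primeFactors.powerset.image (fun s => ∏ p ∈ s, p ^ n.factorization p) := by
  ext e
  simp only [mem_image, mem_powerset]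
  constructor
  · intro he
    obtain ⟨hen, -, -⟩ := mem_uDivisors.1 he
    have he0 : e ≠ 0 := ne_zero_of_dvd_ne_zero hn hen
    refine ⟨e.primeFactors, Nat.primeFactors_mono hen hn, ?_⟩
    conv_rhs => rw [Nat.prod_primeFactors_pow_factorization he0]
    exact prod_congr rfl fun p hp => by rw [factorization_eq_of_mem_uDivisors he hp]
  · rintro ⟨s, hs, rfl⟩
    exact prod_pow_factorization_mem_uDivisors hn hs

lemma card_uDivisors_le (n : ℕ) : #(uDivisors n) ≤ 2 ^ #n.primeFactors := by
  rcases eq_or_ne n 0 with rfl | hn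
  · simp [uDivisors]
  rw [uDivisors_eq_image hn, ← card_powerset]
  exact card_image_le

lemma mustar_mul {a b : ℕ} (h : a.Coprime b) : mustar (a * b) = mustar a * mustar b := by
  rw [mustar, mustar, mustar, h.primeFactors_mul, card_union_of_disjoint h.disjoint_primeFactors,
    pow_add]

lemma mustar_div_eq_mul {d g e : ℕ} (heg : e ∣ g) (hg : g ∈ uDivisors d) :
    mustar (d / e) = mustar (d / g) * mustar (g / e) := by
  obtain ⟨hgd, hcop, hd⟩ := mem_uDivisors.1 hg
  have hg0 : 0 < g := Nat.pos_of_ne_zero (ne_zero_of_dvd_ne_zero hd hgd)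
  have hsplit : d / e = g / e * (d / g) := by
    rw [Nat.div_mul_div_comm heg hgd, mul_comm e, Nat.mul_div_mul_left _ _ hg0]
  rw [hsplit, mustar_mul (hcop.coprime_dvd_left (Nat.div_dvd_of_dvd heg)), mul_comm]

lemma primeFactors_div_of_mem_uDivisors {e n : ℕ} (he : e ∈ uDivisors n) :
    (n / e).primeFactors = n.primeFactors \ e.primeFactors := by
  obtain ⟨hen, hcop, -⟩ := mem_uDivisors.1 he
  conv_rhs => rw [← Nat.mul_div_cancel' hen, hcop.primeFactors_mul]
  exact (union_sdiff_cancel_left hcop.disjoint_primeFactors).symm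

lemma sum_uDivisors_mul_mustar_div {g d : ℕ} (hg : g ∈ uDivisors d) :
    ∑ e ∈ uDivisors g, (e : ℤ) * mustar (d / e)
      = mustar (d / g) * ∏ p ∈ g.primeFactors, ((p : ℤ) ^ g.factorization p - 1) := by
  obtain ⟨hgd, -, hd⟩ := mem_uDivisors.1 hg
  have hg0 : g ≠ 0 := ne_zero_of_dvd_ne_zero hd hgd
  rw [uDivisors_eq_image hg0, sum_image (injOn_prod_pow_factorization g)]
  simp_rw [sub_eq_add_neg, prod_add, mul_sum]
  refine sum_congr rfl fun s hs => ?_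
  rw [mem_powerset] at hs
  have he := prod_pow_factorization_mem_uDivisors hg0 hs
  rw [mustar_div_eq_mul (mem_uDivisors.1 he).1 hg, mustar.eq_1 (g / _),
    primeFactors_div_of_mem_uDivisors he, primeFactors_prod_pow_factorization hs, prod_const]
  push_cast
  ring

lemma abs_sum_uDivisors_mul_mustar_div_le {g d : ℕ} (hg : g ∈ uDivisors d) :
    |∑ e ∈ uDivisors g, (e : ℤ) * mustar (d / e)| ≤ g := by
  obtain ⟨hgd, -, hd⟩ := mem_uDivisors.1 hg
  have hg0 : g ≠ 0 := ne_zero_of_dvd_ne_zero hd hgd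
  have hpow : ∀ p ∈ g.primeFactors, (1 : ℤ) ≤ (p : ℤ) ^ g.factorization p := fun p hp =>
    one_le_pow₀ (by exact_mod_cast (Nat.prime_of_mem_primeFactors hp).one_le)
  calc |∑ e ∈ uDivisors g, (e : ℤ) * mustar (d / e)|
      = ∏ p ∈ g.primeFactors, ((p : ℤ) ^ g.factorization p - 1) := by
        rw [sum_uDivisors_mul_mustar_div hg, abs_mul, mustar, abs_pow, abs_neg, abs_one, one_pow,
          one_mul, abs_prod]
        exact prod_congr rfl fun p hp => abs_of_nonneg (sub_nonneg.2 (hpow p hp))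
    _ ≤ ∏ p ∈ g.primeFactors, (p : ℤ) ^ g.factorization p :=
        prod_le_prod (fun p hp => sub_nonneg.2 (hpow p hp)) fun _ _ => sub_le_self _ zero_le_one
    _ = g := by exact_mod_cast (Nat.prod_primeFactors_pow_factorization hg0).symm

lemma gcud_le (n q : ℕ) : gcud n q ≤ n :=
  Finset.sup_le fun _ he => Nat.divisor_le (mem_filter.1 (mem_inter.1 he).1).1

lemma abs_ctilde_le_gcud (q n : ℕ) : |ctilde q n| ≤ gcud n q := by
  rcases (uDivisors n ∩ uDivisors q).eq_empty_or_nonempty with h | h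
  · rw [ctilde, gcud, h, sup_empty]
    simp [uDivisors]
  · obtain ⟨g, hg, hsup⟩ := exists_mem_eq_sup _ h id
    rw [ctilde, gcud, hsup]
    exact abs_sum_uDivisors_mul_mustar_div_le (mem_inter.1 hg).2

theorem sum_abs_ctilde_le_general (q n : ℕ) :
    ∑ d ∈ uDivisors q, |ctilde d n| ≤ 2 ^ q.primeFactors.card * (n : ℤ) := by
  calc ∑ d ∈ uDivisors q, |ctilde d n| ≤ ∑ _d ∈ uDivisors q, (n : ℤ) :=
        sum_le_sum fun d _ => (abs_ctilde_le_gcud d n).trans (by exact_mod_cast gcud_le n d)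
    _ = #(uDivisors q) * (n : ℤ) := by rw [sum_const, nsmul_eq_mul]
    _ ≤ 2 ^ q.primeFactors.card * (n : ℤ) := by gcongr; exact_mod_cast card_uDivisors_le q

theorem sum_abs_ctilde_le (q n : ℕ) (hq : 0 < q) (hn : 0 < n) :
    ∑ d ∈ uDivisors q, |ctilde d n| ≤ 2 ^ q.primeFactors.card * (n : ℤ) :=
  sum_abs_ctilde_le_general q n
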